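/- arXiv:1406.0100 — 4 statements merged into one kernel-verified Lean document; each statement's English description precedes it below -/
import Mathlib

section
/- For all integers m ≥ 1 and n ≥ 1, the following identity holds in ℂ: (−1)^{mn} · ∏_{h=1}^{m} U_{2n}(i·cos(hπ/(2m+1))) = ∏_{h=1}^{m} ∏_{k=1}^{n} (4·cos²(hπ/(2m+1)) + 4·cos²(kπ/(2n+1))), where i is the imaginary unit and the right-hand side is a real number regarded as a complex number. -/
/-!
The roots of `U_N` are `cos (kπ/(N+1))`, `1 ≤ k ≤ N`, so `U_N = 2^N ∏ (X - cos (kπ/(N+1)))`.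
For `N = 2n` the roots for `k` and `2n + 1 - k` are opposite, hence
`U_{2n}(x) = ∏_{k=1}^{n} (4x² - 4cos²(kπ/(2n+1)))`, and at `x = i y` every factor is
`-(4y² + 4cos²(kπ/(2n+1)))`. The signs `(-1)^n` collected over `h = 1, …, m` cancel `(-1)^{mn}`.
-/

open Real Polynomial

theorem Finset.prod_Icc_one_eq_prod_range {M : Type*} [CommMonoid M] (f : ℕ → M) (n : ℕ) :
    ∏ k ∈ Icc 1 n, f k = ∏ k ∈ range n, f (k + 1) := by
  rw [range_eq_Ico, prod_Ico_add' f 0 n 1, zero_add, Ico_add_one_right_eq_Icc]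

theorem Finset.prod_range_two_mul {M : Type*} [CommMonoid M] (f : ℕ → M) (n : ℕ) :
    ∏ k ∈ range (2 * n), f k = ∏ k ∈ range n, f k * f (2 * n - 1 - k) := by
  rw [two_mul, prod_range_add, ← prod_range_reflect (fun k ↦ f (n + k)), ← prod_mul_distrib]
  refine prod_congr rfl fun k hk ↦ ?_
  rw [mem_range] at hk
  congr 2
  omega

theorem Real.cos_reflect_mul_pi_div {N k : ℕ} (hk : k < N) :
    cos (((N - 1 - k : ℕ) + 1) * π / (N + 1)) = -cos ((k + 1) * π / (N + 1)) := by
  have hindex : ((N - 1 - k : ℕ) + 1 : ℝ) = (N + 1) - (k + 1) := by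
    rw [Nat.cast_sub (by omega), Nat.cast_sub (by omega)]
    push_cast
    ring
  rw [hindex, sub_mul, sub_div, mul_div_cancel_left₀ _ (by positivity), cos_pi_sub]

namespace Polynomial.Chebyshev

theorem U_real_eq_C_mul_prod_X_sub_C (N : ℕ) :
    U ℝ N = Polynomial.C (2 ^ N) *
      ∏ k ∈ Finset.range N, (X - Polynomial.C (cos ((k + 1) * π / (N + 1)))) := by
  have hroots : (U ℝ N).roots =
      (Finset.range N).val.map fun k : ℕ ↦ cos ((k + 1) * π / (N + 1)) := by
    rw [roots_U_real, Finset.image_val, Finset.range_val, (roots_U_real_nodup N).dedup]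
  have hcard : Multiset.card (U ℝ N).roots = (U ℝ N).natDegree := by
    rw [hroots, Multiset.card_map, Finset.card_val, Finset.card_range, natDegree_U_natCast]
  rw [← C_leadingCoeff_mul_prod_multiset_X_sub_C hcard, leadingCoeff_U_natCast, hroots,
    Multiset.map_map]
  rfl

theorem U_real_two_mul_eq_prod (n : ℕ) :
    U ℝ (2 * n : ℕ) = ∏ k ∈ Finset.range n,
      (Polynomial.C 4 * X ^ 2 - Polynomial.C (4 * cos ((k + 1) * π / (2 * n + 1)) ^ 2)) := by
  rw [U_real_eq_C_mul_prod_X_sub_C, Finset.prod_range_two_mul, pow_mul, Polynomial.C_pow,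
    Finset.pow_eq_prod_const, ← Finset.prod_mul_distrib]
  refine Finset.prod_congr rfl fun k hk ↦ ?_
  rw [cos_reflect_mul_pi_div (by rw [Finset.mem_range] at hk; omega)]
  push_cast
  simp only [map_neg, map_mul, map_pow, map_ofNat]
  ring

theorem eval_U_two_mul_I_mul_ofReal (n : ℕ) (y : ℝ) :
    (U ℂ (2 * n)).eval (Complex.I * y) = (-1) ^ n *
      ((∏ k ∈ Finset.Icc 1 n, (4 * y ^ 2 + 4 * cos (k * π / (2 * n + 1)) ^ 2) : ℝ) : ℂ) := by
  rw [← map_U (algebraMap ℝ ℂ), show (2 * n : ℤ) = (2 * n : ℕ) by push_cast; rfl,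
    U_real_two_mul_eq_prod, Polynomial.map_prod, eval_prod, Finset.prod_Icc_one_eq_prod_range,
    Complex.ofReal_prod, Finset.pow_eq_prod_const (-1 : ℂ), ← Finset.prod_mul_distrib]
  refine Finset.prod_congr rfl fun k _ ↦ ?_
  simp only [Polynomial.map_sub, Polynomial.map_mul, Polynomial.map_pow, Polynomial.map_C,
    Polynomial.map_X, eval_sub, eval_mul, eval_pow, eval_C, eval_X, Complex.coe_algebraMap]
  push_cast
  linear_combination (4 * (y : ℂ) ^ 2) * Complex.I_sq

end Polynomial.Chebyshev

theorem chebyshevU_product_eq_double_product_general (m n : ℕ) :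
    (-1 : ℂ) ^ (m * n) *
      ∏ h ∈ Finset.Icc 1 m,
        (Polynomial.Chebyshev.U ℂ (2 * n)).eval
          (Complex.I * (Real.cos (h * π / (2 * m + 1)) : ℂ)) =
      ((∏ h ∈ Finset.Icc 1 m, ∏ k ∈ Finset.Icc 1 n,
        (4 * Real.cos (h * π / (2 * m + 1)) ^ 2 +
         4 * Real.cos (k * π / (2 * n + 1)) ^ 2) : ℝ) : ℂ) := by
  simp_rw [Chebyshev.eval_U_two_mul_I_mul_ofReal, Finset.prod_mul_distrib, Finset.prod_const,
    Nat.card_Icc, Nat.add_sub_cancel, ← pow_mul, ← mul_assoc, ← pow_add, Complex.ofReal_prod]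
  rw [Even.neg_one_pow ⟨m * n, by ring⟩, one_mul]

theorem chebyshevU_product_eq_double_product (m n : ℕ) (hm : 1 ≤ m) (hn : 1 ≤ n) :
    (-1 : ℂ) ^ (m * n) *
      ∏ h ∈ Finset.Icc 1 m,
        (Polynomial.Chebyshev.U ℂ (2 * n)).eval
          (Complex.I * (Real.cos (h * π / (2 * m + 1)) : ℂ)) =
      ((∏ h ∈ Finset.Icc 1 m, ∏ k ∈ Finset.Icc 1 n,
        (4 * Real.cos (h * π / (2 * m + 1)) ^ 2 +
         4 * Real.cos (k * π / (2 * n + 1)) ^ 2) : ℝ) : ℂ) :=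
  chebyshevU_product_eq_double_product_general m n
end

section
/- For all integers m ≥ 1 and n ≥ 1, det D_{m,n} = ∏_{h=1}^{m} ∏_{k=1}^{n} (4·cos²(hπ/(2m+1)) + 4·cos²(kπ/(2n+1))). -/
open Real

/-- The `n × n` matrix `A_n` with diagonal entries `4` except the last, which is `3`,
entries `-1` on the sub- and super-diagonal, and `0` elsewhere. -/
def matA (n : ℕ) : Matrix (Fin n) (Fin n) ℝ :=
  Matrix.of fun h k =>
    if h = k then (if (h : ℕ) = n - 1 then 3 else 4)
    else if |(h : ℤ) - (k : ℤ)| = 1 then -1 else 0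

/-- `B_n = A_n - I_n`. -/
def matB (n : ℕ) : Matrix (Fin n) (Fin n) ℝ := matA n - 1

/-- The `mn × mn` block-tridiagonal matrix `D_{m,n}`: diagonal blocks `A_n` except the
last one, which is `B_n`; blocks immediately above and below the diagonal are `-I_n`;
all other blocks are zero.  (For `m = 1` this is just `B_n`.) -/
def matD (m n : ℕ) : Matrix (Fin m × Fin n) (Fin m × Fin n) ℝ :=
  Matrix.of fun p q =>
    if p.1 = q.1 then
      (if (p.1 : ℕ) = m - 1 then matB n else matA n) p.2 q.2
    else if |(p.1 : ℤ) - (q.1 : ℤ)| = 1 then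
      (-(1 : Matrix (Fin n) (Fin n) ℝ)) p.2 q.2
    else 0

/-!
`D_{m,n} = C_m ⊗ 1 + 1 ⊗ C_n` is a Kronecker sum, where `C_n = matC n` is the Laplacian of a
path whose first vertex is joined to the sink and whose last vertex is reflecting. For
`θ = π - 2hπ/(2n+1)` with `1 ≤ h ≤ n`, the vector `j ↦ sin ((j+1)θ)` meets both boundary
conditions (`sin 0 = 0` and `sin ((n+1)θ) = sin (nθ)`), so it is an eigenvector of `C_n` with
eigenvalue `2 - 2 cos θ = 4 cos² (hπ/(2n+1))`. These `n` eigenvalues are distinct, so the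
eigenvectors form a basis, and the Kronecker products of the two eigenbases diagonalize
`D_{m,n}` with the pairwise sums of eigenvalues on the diagonal.
-/

open Matrix Finset Kronecker

section KroneckerSum

variable {R ι κ : Type*} [CommRing R] [Fintype ι] [Fintype κ] [DecidableEq ι] [DecidableEq κ]

theorem Matrix.mul_eq_mul_diagonal_of_mulVec_col {A P : Matrix ι ι R} {d : ι → R}
    (h : ∀ k, A *ᵥ P.col k = d k • P.col k) : A * P = P * diagonal d := by
  ext j k
  simpa [mul_apply, mulVec, dotProduct, mul_comm, diagonal_apply] using congrFun (h k) j

theorem Matrix.det_eq_prod_of_mul_eq_mul_diagonal {A P : Matrix ι ι R} {d : ι → R}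
    (hP : IsUnit P) (h : A * P = P * diagonal d) : A.det = ∏ i, d i := by
  have hconj : A = P * diagonal d * P⁻¹ := by
    rw [← h, Matrix.mul_assoc, mul_nonsing_inv _ ((isUnit_iff_isUnit_det P).mp hP),
      Matrix.mul_one]
  rw [hconj, det_conj hP, det_diagonal]

theorem Matrix.kroneckerSum_mul_kronecker {A P : Matrix ι ι R} {B Q : Matrix κ κ R}
    {a : ι → R} {b : κ → R} (hA : A * P = P * diagonal a) (hB : B * Q = Q * diagonal b) :
    (A ⊗ₖ 1 + 1 ⊗ₖ B) * (P ⊗ₖ Q) = (P ⊗ₖ Q) * diagonal fun p => a p.1 + b p.2 := by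
  have hdiag :
      (diagonal fun p : ι × κ => a p.1 + b p.2) = diagonal a ⊗ₖ 1 + 1 ⊗ₖ diagonal b := by
    rw [← diagonal_one, ← diagonal_one, diagonal_kronecker_diagonal, diagonal_kronecker_diagonal,
      diagonal_add]
    simp
  rw [hdiag, add_mul, mul_add, ← mul_kronecker_mul, ← mul_kronecker_mul, ← mul_kronecker_mul,
    ← mul_kronecker_mul, hA, hB, Matrix.one_mul, Matrix.mul_one, Matrix.one_mul, Matrix.mul_one]

theorem Matrix.det_kroneckerSum {A P : Matrix ι ι R} {B Q : Matrix κ κ R}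
    {a : ι → R} {b : κ → R} (hP : IsUnit P) (hQ : IsUnit Q)
    (hA : A * P = P * diagonal a) (hB : B * Q = Q * diagonal b) :
    (A ⊗ₖ 1 + 1 ⊗ₖ B).det = ∏ p : ι × κ, (a p.1 + b p.2) := by
  refine det_eq_prod_of_mul_eq_mul_diagonal ?_ (kroneckerSum_mul_kronecker hA hB)
  rw [isUnit_iff_isUnit_det, det_kronecker] at *
  exact (hP.pow _).mul (hQ.pow _)

end KroneckerSum

theorem Fin.prod_univ_add_one_eq_prod_Icc {M : Type*} [CommMonoid M] (n : ℕ) (f : ℕ → M) :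
    ∏ k : Fin n, f (k + 1) = ∏ h ∈ Icc 1 n, f h := by
  rw [Fin.prod_univ_eq_prod_range (fun k => f (k + 1)), range_eq_Ico, prod_Ico_add' f 0 n 1,
    zero_add, Ico_add_one_right_eq_Icc]

namespace SymmetricSandpile

def matC (n : ℕ) : Matrix (Fin n) (Fin n) ℝ :=
  Matrix.of fun h k =>
    if h = k then (if (h : ℕ) = n - 1 then 1 else 2)
    else if |(h : ℤ) - (k : ℤ)| = 1 then -1 else 0

theorem matD_eq_kroneckerSum (m n : ℕ) : matD m n = matC m ⊗ₖ 1 + 1 ⊗ₖ matC n := by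
  ext ⟨h, a⟩ ⟨k, b⟩
  rw [Matrix.add_apply, kronecker_apply, kronecker_apply]
  simp only [matD, of_apply, Fin.ext_iff, abs_eq (zero_le_one' ℤ)]
  split_ifs <;>
  · simp only [matA, matB, matC, of_apply, Matrix.sub_apply, Matrix.one_apply, Matrix.neg_apply,
      Fin.ext_iff, abs_eq (zero_le_one' ℤ)]
    split_ifs <;> first | omega | norm_num

theorem matC_apply {n : ℕ} (i a : Fin n) :
    matC n i a = (if (a : ℕ) = i then 2 else 0) - (if (a : ℕ) = i + 1 then 1 else 0)
      - (if (a : ℕ) + 1 = i then 1 else 0)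
      - (if (a : ℕ) = i ∧ (i : ℕ) + 1 = n then 1 else 0) := by
  have hi := i.isLt
  simp only [matC, of_apply, Fin.ext_iff, abs_eq (zero_le_one' ℤ)]
  split_ifs <;> first | omega | norm_num

-- `s 0 = 0` and `s (n + 1) = s n` make the first and last rows obey the interior three-term rule.
theorem matC_mulVec_apply {n : ℕ} (s : ℕ → ℝ) (h0 : s 0 = 0) (hn : s (n + 1) = s n)
    (i : Fin n) :
    (matC n *ᵥ fun j => s (j + 1)) i = 2 * s (i + 1) - s i - s (i + 2) := by
  obtain ⟨i, hi⟩ := i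
  simp only [mulVec, dotProduct, matC_apply]
  rw [Fin.sum_univ_eq_sum_range (fun a => ((if a = i then 2 else 0) - (if a = i + 1 then 1 else 0)
      - (if a + 1 = i then 1 else 0) - (if a = i ∧ i + 1 = n then 1 else 0)) * s (a + 1)) n]
  simp only [sub_mul, ite_mul, zero_mul, one_mul, sum_sub_distrib, sum_ite_eq', mem_range, ite_and]
  have hprev : (∑ x ∈ range n, if x + 1 = i then s (x + 1) else 0) = s i := by
    rcases i with _ | j
    · simp [h0]
    · simp only [Nat.add_right_cancel_iff, sum_ite_eq', mem_range]
      exact if_pos (by omega)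
  rw [hprev, if_pos hi, if_pos hi]
  rcases (Nat.succ_le_of_lt hi).lt_or_eq with hlt | rfl
  · rw [if_pos hlt, if_neg hlt.ne]; ring
  · rw [if_neg (lt_irrefl _), if_pos rfl, hn]; ring

theorem matC_mulVec_sin {n : ℕ} {θ : ℝ} (hθ : sin ((n + 1) * θ) = sin (n * θ)) :
    (matC n *ᵥ fun j : Fin n => sin ((j + 1) * θ)) =
      (2 - 2 * cos θ) • fun j : Fin n => sin ((j + 1) * θ) := by
  funext i
  have key := matC_mulVec_apply (fun j => sin (j * θ)) (by simp) (by exact_mod_cast hθ) i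
  push_cast at key
  rw [key, Pi.smul_apply, smul_eq_mul]
  have e1 : (i : ℝ) * θ = (i + 1) * θ - θ := by ring
  have e2 : ((i : ℝ) + 2) * θ = (i + 1) * θ + θ := by ring
  rw [e1, e2, sin_sub, sin_add]
  ring

noncomputable def theta (n h : ℕ) : ℝ := π - 2 * (h * π / (2 * n + 1))

theorem sin_succ_mul_theta (n h : ℕ) : sin ((n + 1) * theta n h) = sin (n * theta n h) := by
  have hperiod : (n + 1) * theta n h = π - n * theta n h + ((n - h : ℤ) : ℝ) * (2 * π) := by
    unfold theta
    push_cast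
    field_simp
    ring
  rw [hperiod, sin_add_int_mul_two_pi, sin_pi_sub]

noncomputable def eigenvalue (n h : ℕ) : ℝ := 4 * cos (h * π / (2 * n + 1)) ^ 2

theorem two_sub_two_mul_cos_theta (n h : ℕ) : 2 - 2 * cos (theta n h) = eigenvalue n h := by
  rw [theta, eigenvalue, cos_pi_sub, cos_two_mul]
  ring

theorem theta_mem_Ioo {n h : ℕ} (h1 : 1 ≤ h) (hn : h ≤ n) : theta n h ∈ Set.Ioo 0 π := by
  have hden : (0 : ℝ) < 2 * n + 1 := by positivity
  have h1' : (1 : ℝ) ≤ h := by exact_mod_cast h1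
  have hn' : (h : ℝ) ≤ n := by exact_mod_cast hn
  constructor
  · rw [theta, sub_pos, ← lt_div_iff₀' two_pos, div_lt_iff₀ hden]
    nlinarith [pi_pos]
  · rw [theta, sub_lt_self_iff]
    positivity

theorem eigenvalue_injOn (n : ℕ) : Set.InjOn (eigenvalue n) (Set.Icc 1 n) := by
  intro h hh l hl hhl
  rw [← two_sub_two_mul_cos_theta, ← two_sub_two_mul_cos_theta] at hhl
  have hcos : cos (theta n h) = cos (theta n l) := by linarith
  have heq := injOn_cos (Set.Ioo_subset_Icc_self (theta_mem_Ioo hh.1 hh.2))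
    (Set.Ioo_subset_Icc_self (theta_mem_Ioo hl.1 hl.2)) hcos
  rwa [theta, theta, sub_right_inj, mul_right_inj' two_ne_zero, div_left_inj' (by positivity),
    mul_left_inj' pi_ne_zero, Nat.cast_inj] at heq

noncomputable def sinMatrix (n : ℕ) : Matrix (Fin n) (Fin n) ℝ :=
  of fun j k => sin ((j + 1) * theta n ((k : ℕ) + 1))

theorem matC_mulVec_sinMatrix_col (n : ℕ) (k : Fin n) :
    matC n *ᵥ (sinMatrix n).col k = eigenvalue n ((k : ℕ) + 1) • (sinMatrix n).col k := by
  rw [← two_sub_two_mul_cos_theta]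
  exact matC_mulVec_sin (sin_succ_mul_theta n _)

theorem matC_mul_sinMatrix (n : ℕ) :
    matC n * sinMatrix n =
      sinMatrix n * diagonal fun k : Fin n => eigenvalue n ((k : ℕ) + 1) :=
  mul_eq_mul_diagonal_of_mulVec_col (matC_mulVec_sinMatrix_col n)

theorem isUnit_sinMatrix (n : ℕ) : IsUnit (sinMatrix n) := by
  rw [← linearIndependent_cols_iff_isUnit]
  refine Module.End.eigenvectors_linearIndependent' (toLin' (matC n))
    (fun k : Fin n => eigenvalue n ((k : ℕ) + 1)) ?_ _ fun k => ⟨?_, ?_⟩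
  · intro k l hkl
    exact Fin.ext (Nat.succ_injective
      (eigenvalue_injOn n ⟨by omega, k.isLt⟩ ⟨by omega, l.isLt⟩ hkl))
  · rw [Module.End.mem_genEigenspace_one, toLin'_apply]
    exact matC_mulVec_sinMatrix_col n k
  · intro hzero
    have h0 := congrFun hzero ⟨0, k.pos⟩
    simp only [col_apply, sinMatrix, of_apply, Nat.cast_zero, zero_add, one_mul,
      Pi.zero_apply] at h0
    have hθ : theta n ((k : ℕ) + 1) ∈ Set.Ioo 0 π := theta_mem_Ioo (by omega) k.isLt
    exact (sin_pos_of_pos_of_lt_pi hθ.1 hθ.2).ne' h0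

end SymmetricSandpile

open SymmetricSandpile

theorem det_matD_eq_double_product_general (m n : ℕ) :
    (matD m n).det =
      ∏ h ∈ Finset.Icc 1 m, ∏ k ∈ Finset.Icc 1 n,
        (4 * Real.cos (h * π / (2 * m + 1)) ^ 2 +
         4 * Real.cos (k * π / (2 * n + 1)) ^ 2) := by
  rw [matD_eq_kroneckerSum, det_kroneckerSum (isUnit_sinMatrix m) (isUnit_sinMatrix n)
    (matC_mul_sinMatrix m) (matC_mul_sinMatrix n), Fintype.prod_prod_type]
  simp only [eigenvalue, ← Fin.prod_univ_add_one_eq_prod_Icc]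

theorem det_matD_eq_double_product (m n : ℕ) (hm : 1 ≤ m) (hn : 1 ≤ n) :
    (matD m n).det =
      ∏ h ∈ Finset.Icc 1 m, ∏ k ∈ Finset.Icc 1 n,
        (4 * Real.cos (h * π / (2 * m + 1)) ^ 2 +
         4 * Real.cos (k * π / (2 * n + 1)) ^ 2) :=
  det_matD_eq_double_product_general m n
end

section
/- Let m ≥ 1 and n ≥ 1 be integers and let A, B, C be n×n complex matrices. Let D(m) be the mn×mn block-tridiagonal matrix whose diagonal blocks are A except the last one, which is B; whose blocks immediately above the diagonal are −I_n; whose blocks immediately below the diagonal are −I_n except the one in the last block-row, which is −C; and whose other blocks are zero (with D(1) = B). Then det D(m) = (−1)^n · det(−B·U_{m−1}(A/2) + C·U_{m−2}(A/2)), where U_j(A/2) denotes the evaluation of the Chebyshev polynomial U_j at the matrix A/2, with the convention U_{−1} = 0. -/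
open Polynomial

open Matrix Finset

noncomputable def u {n : ℕ} (A : Matrix (Fin n) (Fin n) ℂ) (k : ℤ) : Matrix (Fin n) (Fin n) ℂ :=
  Polynomial.aeval ((2 : ℂ)⁻¹ • A) (Polynomial.Chebyshev.U ℂ k)

lemma u_neg_one {n : ℕ} (A : Matrix (Fin n) (Fin n) ℂ) : u A (-1) = 0 := by
  simp [u, Polynomial.Chebyshev.U_neg_one]

lemma u_zero {n : ℕ} (A : Matrix (Fin n) (Fin n) ℂ) : u A 0 = 1 := by
  simp [u, Polynomial.Chebyshev.U_zero]

lemma aeval_twoX {n : ℕ} (A : Matrix (Fin n) (Fin n) ℂ) :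
    Polynomial.aeval ((2 : ℂ)⁻¹ • A) (2 * X : ℂ[X]) = A := by
  rw [_root_.map_mul, Polynomial.aeval_X, map_ofNat]
  rw [mul_smul_comm, two_mul, smul_add, ← add_smul]
  norm_num

lemma u_one {n : ℕ} (A : Matrix (Fin n) (Fin n) ℂ) : u A 1 = A := by
  rw [u, Polynomial.Chebyshev.U_one, aeval_twoX]

lemma u_rec {n : ℕ} (A : Matrix (Fin n) (Fin n) ℂ) (k : ℤ) :
    u A (k + 2) = A * u A (k + 1) - u A k := by
  rw [u, Polynomial.Chebyshev.U_add_two, map_sub, _root_.map_mul, aeval_twoX]; rfl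


/-- The `mn × mn` block-tridiagonal matrix with diagonal blocks `A` except the last one,
which is `B`; blocks immediately above the diagonal equal to `-I_n`; blocks immediately
below the diagonal equal to `-I_n`, except the one in the last block-row, which is `-C`;
and all other blocks zero.  (For `m = 1` this is just `B`.) -/
def blockTridiag (m n : ℕ) (A B C : Matrix (Fin n) (Fin n) ℂ) :
    Matrix (Fin m × Fin n) (Fin m × Fin n) ℂ :=
  Matrix.of fun p q =>
    if p.1 = q.1 then
      (if (p.1 : ℕ) = m - 1 then B else A) p.2 q.2
    else if (p.1 : ℕ) = (q.1 : ℕ) + 1 then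
      (if (p.1 : ℕ) = m - 1 then -C else -(1 : Matrix (Fin n) (Fin n) ℂ)) p.2 q.2
    else if (q.1 : ℕ) = (p.1 : ℕ) + 1 then
      (-(1 : Matrix (Fin n) (Fin n) ℂ)) p.2 q.2
    else 0

def Dblk (m n : ℕ) (A B C : Matrix (Fin n) (Fin n) ℂ) (i k : Fin m) :
    Matrix (Fin n) (Fin n) ℂ :=
  if i = k then (if (i : ℕ) = m - 1 then B else A)
  else if (i : ℕ) = (k : ℕ) + 1 then (if (i : ℕ) = m - 1 then -C else -1)
  else if (k : ℕ) = (i : ℕ) + 1 then -1 else 0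

lemma blockTridiag_eq (m n : ℕ) (A B C : Matrix (Fin n) (Fin n) ℂ)
    (p q : Fin m × Fin n) :
    blockTridiag m n A B C p q = Dblk m n A B C p.1 q.1 p.2 q.2 := by
  simp only [blockTridiag, Dblk, Matrix.of_apply]
  split_ifs <;> simp

noncomputable def M0 (m n : ℕ) (A B C : Matrix (Fin n) (Fin n) ℂ) :
    Matrix (Fin n) (Fin n) ℂ :=
  B * u A ((m : ℤ) - 1) - C * u A ((m : ℤ) - 2)

lemma key (m n : ℕ) (A B C : Matrix (Fin n) (Fin n) ℂ) (i : Fin m) :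
    ∑ k : Fin m, Dblk m n A B C i k * u A (k : ℤ) =
      if (i : ℕ) = m - 1 then M0 m n A B C else 0 := by
  have hm : 0 < m := i.pos
  have hsplit : ∀ k : Fin m, Dblk m n A B C i k * u A (k : ℤ) =
      (if i = k then (if (i : ℕ) = m - 1 then B else A) * u A (k : ℤ) else 0)
      + ((if (i : ℕ) = (k : ℕ) + 1 then
            (if (i : ℕ) = m - 1 then -C else -1) * u A (k : ℤ) else 0)
        + (if (k : ℕ) = (i : ℕ) + 1 then (-1) * u A (k : ℤ) else 0)) := by
    intro k
    by_cases h1 : i = k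
    · have h2 : ¬ (i : ℕ) = (k : ℕ) + 1 := by omega
      have h3 : ¬ (k : ℕ) = (i : ℕ) + 1 := by omega
      simp [Dblk, h1, h2, h3]
    · have h1' : ¬ (i : ℕ) = (k : ℕ) := fun h => h1 (Fin.val_injective h)
      by_cases h2 : (i : ℕ) = (k : ℕ) + 1
      · have h3 : ¬ (k : ℕ) = (i : ℕ) + 1 := by omega
        have h4 : ¬ (k : ℕ) = (k : ℕ) + 1 + 1 := by omega
        simp [Dblk, h1, h2, h3, h4]
      · by_cases h3 : (k : ℕ) = (i : ℕ) + 1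
        · have h4 : ¬ (i : ℕ) = (i : ℕ) + 1 + 1 := by omega
          simp [Dblk, h1, h2, h3, h4]
        · simp [Dblk, h1, h2, h3]
  rw [Finset.sum_congr rfl (fun k _ => hsplit k), Finset.sum_add_distrib,
    Finset.sum_add_distrib]
  have hS1 : (∑ k : Fin m, if i = k then
      (if (i : ℕ) = m - 1 then B else A) * u A (k : ℤ) else 0)
      = (if (i : ℕ) = m - 1 then B else A) * u A (i : ℤ) := by
    simp
  have hS2 : (∑ k : Fin m, if (i : ℕ) = (k : ℕ) + 1 then
      (if (i : ℕ) = m - 1 then -C else -1) * u A (k : ℤ) else 0)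
      = (if 1 ≤ (i : ℕ) then
          (if (i : ℕ) = m - 1 then -C else -1) * u A ((i : ℤ) - 1) else 0) := by
    by_cases hi0 : 1 ≤ (i : ℕ)
    · rw [if_pos hi0]
      have hlt : (i : ℕ) - 1 < m := by omega
      have hcong : ∀ k : Fin m, (if (i : ℕ) = (k : ℕ) + 1 then
          (if (i : ℕ) = m - 1 then -C else -1) * u A (k : ℤ) else 0)
          = (if (⟨(i : ℕ) - 1, hlt⟩ : Fin m) = k then
          (if (i : ℕ) = m - 1 then -C else -1) * u A (k : ℤ) else 0) := by
        intro k
        congr 1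
        simp only [eq_iff_iff, Fin.ext_iff]
        omega
      rw [Finset.sum_congr rfl (fun k _ => hcong k)]
      simp only [Finset.sum_ite_eq, Finset.mem_univ, if_true]
      have hv : (((⟨(i : ℕ) - 1, hlt⟩ : Fin m) : ℕ) : ℤ) = (i : ℤ) - 1 := by
        simp only [Fin.val_mk]; omega
      rw [hv]
    · rw [if_neg hi0]
      apply Finset.sum_eq_zero
      intro k _
      rw [if_neg (by omega)]
  have hS3 : (∑ k : Fin m, if (k : ℕ) = (i : ℕ) + 1 then (-1) * u A (k : ℤ) else 0)
      = (if (i : ℕ) + 1 < m then (-1) * u A ((i : ℤ) + 1) else 0) := by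
    by_cases hi1 : (i : ℕ) + 1 < m
    · rw [if_pos hi1]
      have hcong : ∀ k : Fin m, (if (k : ℕ) = (i : ℕ) + 1 then (-1) * u A (k : ℤ) else 0)
          = (if k = (⟨(i : ℕ) + 1, hi1⟩ : Fin m) then (-1) * u A (k : ℤ) else 0) := by
        intro k
        congr 1
        simp only [eq_iff_iff, Fin.ext_iff]
      rw [Finset.sum_congr rfl (fun k _ => hcong k)]
      simp only [Finset.sum_ite_eq', Finset.mem_univ, if_true]
      have hv : (((⟨(i : ℕ) + 1, hi1⟩ : Fin m) : ℕ) : ℤ) = (i : ℤ) + 1 := by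
        simp only [Fin.val_mk]; omega
      rw [hv]
    · rw [if_neg hi1]
      apply Finset.sum_eq_zero
      intro k _
      rw [if_neg (by omega)]
  rw [hS1, hS2, hS3]
  by_cases hlast : (i : ℕ) = m - 1
  · rw [if_pos hlast, if_pos hlast, if_pos hlast,
      if_neg (by omega : ¬ (i : ℕ) + 1 < m)]
    by_cases hm1 : m = 1
    · have hi0 : (i : ℕ) = 0 := by omega
      rw [if_neg (by omega)]
      rw [M0]
      have e1 : ((m : ℤ) - 1) = 0 := by rw [hm1]; ring
      have e2 : ((m : ℤ) - 2) = -1 := by rw [hm1]; ring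
      rw [e1, e2, u_neg_one, hi0]
      norm_num
    · rw [if_pos (by omega), M0]
      have e1 : ((i : ℤ)) = (m : ℤ) - 1 := by omega
      have e2 : ((i : ℤ) - 1) = (m : ℤ) - 2 := by omega
      rw [e2, e1]
      noncomm_ring
  · rw [if_neg hlast, if_neg hlast, if_neg hlast,
      if_pos (by omega : (i : ℕ) + 1 < m)]
    by_cases hi0 : 1 ≤ (i : ℕ)
    · rw [if_pos hi0]
      have hrec := u_rec A ((i : ℤ) - 1)
      rw [show (i : ℤ) - 1 + 2 = (i : ℤ) + 1 by ring,
        show (i : ℤ) - 1 + 1 = (i : ℤ) by ring] at hrec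
      rw [hrec]
      noncomm_ring
    · rw [if_neg hi0]
      have hi0' : (i : ℕ) = 0 := by omega
      have e0 : ((i : ℤ)) = 0 := by omega
      have e1 : ((i : ℤ) + 1) = 1 := by omega
      rw [e1, e0, u_zero, u_one]
      noncomm_ring

noncomputable def EE (m n : ℕ) (A : Matrix (Fin n) (Fin n) ℂ) :
    Matrix (Fin m × Fin n) (Fin m × Fin n) ℂ :=
  Matrix.of fun p q =>
    if (q.1 : ℕ) = 0 then u A (p.1 : ℤ) p.2 q.2 else if p = q then 1 else 0

lemma EE_blockTriangular (m n : ℕ) (A : Matrix (Fin n) (Fin n) ℂ) :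
    (EE m n A).BlockTriangular (fun p => p.1.rev) := by
  intro p q hlt
  have h : (p.1 : ℕ) < (q.1 : ℕ) := by
    have := (Fin.rev_lt_rev.mp hlt)
    exact this
  have h0 : ¬ (q.1 : ℕ) = 0 := by omega
  have hpq : ¬ p = q := by
    intro h'; rw [h'] at h; omega
  simp [EE, h0, hpq]

lemma EE_det (m n : ℕ) (A : Matrix (Fin n) (Fin n) ℂ) : (EE m n A).det = 1 := by
  rw [(EE_blockTriangular m n A).det_fintype]
  have hblk : ∀ k : Fin m,
      ((EE m n A).toSquareBlock (fun p => p.1.rev) k) = 1 := by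
    intro k
    ext ⟨p, hp⟩ ⟨q, hq⟩
    have hpq1 : p.1 = q.1 := Fin.rev_injective (hp.trans hq.symm)
    have heq : ((⟨p, hp⟩ : {a : Fin m × Fin n // a.1.rev = k}) = ⟨q, hq⟩) ↔ p.2 = q.2 := by
      constructor
      · intro h; simpa using congrArg (fun r => r.1.2) h
      · intro h
        apply Subtype.ext
        exact Prod.ext hpq1 h
    rw [Matrix.toSquareBlock_def]
    by_cases h0 : (q.1 : ℕ) = 0
    · have hp0 : (p.1 : ℤ) = 0 := by rw [hpq1]; exact_mod_cast congrArg Nat.cast h0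
      simp only [EE, Matrix.of_apply, if_pos h0, hp0, u_zero]
      rw [Matrix.one_apply, Matrix.one_apply]
      exact if_congr heq.symm rfl rfl
    · have hpq : p = q ↔ p.2 = q.2 := by
        constructor
        · intro h; rw [h]
        · intro h; exact Prod.ext hpq1 h
      simp only [EE, Matrix.of_apply, if_neg h0, hpq]
      rw [Matrix.one_apply]
      exact if_congr heq.symm rfl rfl
  rw [Finset.prod_congr rfl (fun k _ => by rw [hblk k])]
  simp

noncomputable def FF (m n : ℕ) (A B C : Matrix (Fin n) (Fin n) ℂ) :
    Matrix (Fin m × Fin n) (Fin m × Fin n) ℂ :=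
  Matrix.of fun p q =>
    if (q.1 : ℕ) = 0 then (if (p.1 : ℕ) = m - 1 then M0 m n A B C else 0) p.2 q.2
    else blockTridiag m n A B C p q

lemma mul_EE (m n : ℕ) (A B C : Matrix (Fin n) (Fin n) ℂ) :
    blockTridiag m n A B C * EE m n A = FF m n A B C := by
  ext p q
  obtain ⟨i, x⟩ := p
  obtain ⟨j, y⟩ := q
  rw [Matrix.mul_apply]
  by_cases hj : (j : ℕ) = 0
  · have hterm : ∀ r : Fin m × Fin n,
        blockTridiag m n A B C (i, x) r * EE m n A r (j, y)
          = Dblk m n A B C i r.1 x r.2 * u A (r.1 : ℤ) r.2 y := by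
      intro r
      rw [blockTridiag_eq]
      simp [EE, hj]
    rw [Finset.sum_congr rfl (fun r _ => hterm r), Fintype.sum_prod_type]
    simp_rw [← Matrix.mul_apply]
    rw [← Matrix.sum_apply x y Finset.univ (fun k => Dblk m n A B C i k * u A (k : ℤ))]
    rw [key m n A B C i]
    simp [FF, hj]
  · have hterm : ∀ r : Fin m × Fin n,
        blockTridiag m n A B C (i, x) r * EE m n A r (j, y)
          = if r = (j, y) then blockTridiag m n A B C (i, x) r else 0 := by
      intro r
      by_cases hr : r = (j, y)
      · subst hr
        simp [EE, hj]
      · have : EE m n A r (j, y) = 0 := by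
          have hq0 : ¬ ((j : ℕ) = 0) := hj
          simp [EE, hq0, hr]
        rw [this, if_neg hr, mul_zero]
    rw [Finset.sum_congr rfl (fun r _ => hterm r)]
    rw [Finset.sum_ite_eq' Finset.univ ((j, y) : Fin m × Fin n)]
    simp [FF, hj]

def eBlk (m n : ℕ) (k : Fin m) : Fin n ≃ {p : Fin m × Fin n // p.1.rev = k} where
  toFun := fun y => ⟨(k.rev, y), Fin.rev_rev k⟩
  invFun := fun p => p.1.2
  left_inv := fun y => rfl
  right_inv := by
    rintro ⟨⟨a, y⟩, h⟩
    have : a = k.rev := by rw [← Fin.rev_rev a, h]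
    subst this
    rfl

lemma G_blockTriangular (m' n : ℕ) (A B C : Matrix (Fin n) (Fin n) ℂ) :
    ((FF (m' + 1) n A B C).submatrix id
        (Equiv.prodCongrLeft (fun _ : Fin n => finRotate (m' + 1)))).BlockTriangular
      (fun p => p.1.rev) := by
  intro p q hlt
  obtain ⟨pi, px⟩ := p
  obtain ⟨qj, qy⟩ := q
  have hlt' : qj.rev < pi.rev := hlt
  have hpq : (pi : ℕ) < (qj : ℕ) := Fin.rev_lt_rev.mp hlt'
  rw [Matrix.submatrix_apply, id_eq, Equiv.prodCongrLeft_apply, finRotate_succ_apply]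
  by_cases hql : qj = Fin.last m'
  · have hv : ((qj + 1 : Fin (m' + 1)) : ℕ) = 0 := by
      rw [Fin.val_add_one, if_pos hql]
    have hpv : ¬ (pi : ℕ) = m' + 1 - 1 := by
      have : (qj : ℕ) ≤ m' := Nat.lt_succ_iff.mp qj.isLt
      omega
    simp only [FF, Matrix.of_apply, if_pos hv, if_neg hpv, Matrix.zero_apply]
  · have hv : ((qj + 1 : Fin (m' + 1)) : ℕ) = (qj : ℕ) + 1 := by
      rw [Fin.val_add_one, if_neg hql]
    have hv0 : ¬ ((qj + 1 : Fin (m' + 1)) : ℕ) = 0 := by omega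
    simp only [FF, Matrix.of_apply, if_neg hv0]
    rw [blockTridiag_eq]
    show Dblk (m' + 1) n A B C pi (qj + 1) px qy = 0
    rw [Dblk, if_neg (by simp only [Fin.ext_iff]; omega),
      if_neg (by omega), if_neg (by omega)]
    simp

lemma FF_det (m' n : ℕ) (A B C : Matrix (Fin n) (Fin n) ℂ) :
    (FF (m' + 1) n A B C).det = (M0 (m' + 1) n A B C).det := by
  set σ : Equiv.Perm (Fin (m' + 1) × Fin n) :=
    Equiv.prodCongrLeft (fun _ : Fin n => finRotate (m' + 1)) with hσ
  have hperm := Matrix.det_permute' σ (FF (m' + 1) n A B C)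
  rw [(G_blockTriangular m' n A B C).det_fintype] at hperm
  have hblk : ∀ k : Fin (m' + 1),
      (((FF (m' + 1) n A B C).submatrix id σ).toSquareBlock (fun p => p.1.rev) k).det
        = if k = 0 then (M0 (m' + 1) n A B C).det else (-1 : ℂ) ^ n := by
    intro k
    set e := eBlk (m' + 1) n k with he
    rw [← Matrix.det_submatrix_equiv_self e]
    have hentry : ∀ x y : Fin n,
        ((((FF (m' + 1) n A B C).submatrix id σ).toSquareBlock
            (fun p => p.1.rev) k).submatrix e e) x y
          = (FF (m' + 1) n A B C) (k.rev, x) (k.rev + 1, y) := by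
      intro x y
      show (FF (m' + 1) n A B C) (k.rev, x) (σ (k.rev, y)) = _
      rw [hσ, Equiv.prodCongrLeft_apply, finRotate_succ_apply]
  -- now compute cases
    by_cases hk : k = 0
    · have hkrev : k.rev = Fin.last m' := by rw [hk]; simp [Fin.rev_zero]
      have hM : (((FF (m' + 1) n A B C).submatrix id σ).toSquareBlock
          (fun p => p.1.rev) k).submatrix e e = M0 (m' + 1) n A B C := by
        ext x y
        rw [hentry x y]
        have hv : ((k.rev + 1 : Fin (m' + 1)) : ℕ) = 0 := by
          rw [Fin.val_add_one, if_pos hkrev]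
        have hpv : (k.rev : ℕ) = m' + 1 - 1 := by rw [hkrev]; simp
        simp only [FF, Matrix.of_apply, if_pos hv, if_pos hpv]
      rw [hM, if_pos hk]
    · have hkrev : ¬ k.rev = Fin.last m' := by
        intro h
        apply hk
        rw [← Fin.rev_rev k, h, Fin.rev_last]
      have hM : (((FF (m' + 1) n A B C).submatrix id σ).toSquareBlock
          (fun p => p.1.rev) k).submatrix e e = -(1 : Matrix (Fin n) (Fin n) ℂ) := by
        ext x y
        rw [hentry x y]
        have hv : ((k.rev + 1 : Fin (m' + 1)) : ℕ) = (k.rev : ℕ) + 1 := by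
          rw [Fin.val_add_one, if_neg hkrev]
        have hv0 : ¬ ((k.rev + 1 : Fin (m' + 1)) : ℕ) = 0 := by omega
        simp only [FF, Matrix.of_apply, if_neg hv0]
        rw [blockTridiag_eq]
        show Dblk (m' + 1) n A B C k.rev (k.rev + 1) x y = _
        rw [Dblk, if_neg (by simp only [Fin.ext_iff]; omega), if_neg (by omega),
          if_pos (by omega)]
      rw [hM, if_neg hk]
      rw [Matrix.det_neg, Matrix.det_one, mul_one]
      simp
  rw [Finset.prod_congr rfl (fun k _ => hblk k)] at hperm
  rw [← Finset.mul_prod_erase Finset.univ _ (Finset.mem_univ (0 : Fin (m' + 1)))] at hperm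
  have herase : ∀ k ∈ Finset.univ.erase (0 : Fin (m' + 1)),
      (if k = 0 then (M0 (m' + 1) n A B C).det else (-1 : ℂ) ^ n) = (-1 : ℂ) ^ n := by
    intro k hk
    rw [if_neg (Finset.mem_erase.mp hk).1]
  rw [Finset.prod_congr rfl herase, Finset.prod_const, if_pos rfl] at hperm
  have hcard : (Finset.univ.erase (0 : Fin (m' + 1))).card = m' := by
    rw [Finset.card_erase_of_mem (Finset.mem_univ _), Finset.card_univ]
    simp
  rw [hcard] at hperm
  have hsign : ((Equiv.Perm.sign σ : ℤ) : ℂ) = (-1 : ℂ) ^ (m' * n) := by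
    rw [hσ, Equiv.Perm.sign_prodCongrLeft]
    simp only [sign_finRotate, Finset.prod_const, Finset.card_univ, Fintype.card_fin]
    rw [← pow_mul]
    push_cast
    ring
  rw [hsign] at hperm
  -- hperm : det M0 * ((-1)^n)^m' = (-1)^(m'n) * det FF
  have hpow : ((-1 : ℂ) ^ n) ^ m' = (-1 : ℂ) ^ (m' * n) := by
    rw [← pow_mul, Nat.mul_comm]
  rw [hpow] at hperm
  have hcancel : ((-1 : ℂ) ^ (m' * n)) * ((-1 : ℂ) ^ (m' * n)) = 1 := by
    rw [← pow_add]
    exact Even.neg_one_pow ⟨m' * n, rfl⟩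
  calc (FF (m' + 1) n A B C).det
      = ((-1 : ℂ) ^ (m' * n) * (-1 : ℂ) ^ (m' * n)) * (FF (m' + 1) n A B C).det := by
        rw [hcancel, one_mul]
    _ = (-1 : ℂ) ^ (m' * n) * ((-1 : ℂ) ^ (m' * n) * (FF (m' + 1) n A B C).det) := by ring
    _ = (-1 : ℂ) ^ (m' * n) * ((M0 (m' + 1) n A B C).det * (-1 : ℂ) ^ (m' * n)) := by
        rw [← hperm]
    _ = ((-1 : ℂ) ^ (m' * n) * (-1 : ℂ) ^ (m' * n)) * (M0 (m' + 1) n A B C).det := by ring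
    _ = (M0 (m' + 1) n A B C).det := by rw [hcancel, one_mul]


theorem det_blockTridiag (m n : ℕ) (hm : 1 ≤ m) (hn : 1 ≤ n)
    (A B C : Matrix (Fin n) (Fin n) ℂ) :
    (blockTridiag m n A B C).det =
      (-1 : ℂ) ^ n *
        (-(B * Polynomial.aeval ((2 : ℂ)⁻¹ • A) (Polynomial.Chebyshev.U ℂ ((m : ℤ) - 1)))
          + C * Polynomial.aeval ((2 : ℂ)⁻¹ • A)
              (Polynomial.Chebyshev.U ℂ ((m : ℤ) - 2))).det := by
  obtain ⟨m', rfl⟩ : ∃ k, m = k + 1 := ⟨m - 1, by omega⟩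
  have h1 : (blockTridiag (m' + 1) n A B C).det = (FF (m' + 1) n A B C).det := by
    rw [← mul_EE (m' + 1) n A B C, Matrix.det_mul, EE_det, mul_one]
  rw [h1, FF_det]
  have h2 : -(B * Polynomial.aeval ((2 : ℂ)⁻¹ • A)
        (Polynomial.Chebyshev.U ℂ (((m' + 1 : ℕ) : ℤ) - 1)))
      + C * Polynomial.aeval ((2 : ℂ)⁻¹ • A)
        (Polynomial.Chebyshev.U ℂ (((m' + 1 : ℕ) : ℤ) - 2))
      = -(M0 (m' + 1) n A B C) := by
    rw [M0, u, u]
    abel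
  rw [h2, Matrix.det_neg, Fintype.card_fin, ← mul_assoc, ← pow_add,
    Even.neg_one_pow ⟨n, rfl⟩, one_mul]
end

section
/- For all integers m ≥ 1 and n ≥ 1, the following identity holds in ℂ: (−1)^{mn} · 2^m · ∏_{h=1}^{m} T_{2n}(i·cos(hπ/(2m+1))) = ∏_{h=1}^{m} ∏_{k=1}^{n} (4·cos²(hπ/(2m+1)) + 4·cos²((2k−1)π/(4n))), where i is the imaginary unit and the right-hand side is a real number regarded as a complex number. -/
/-!
Since `T_{2n}(x) = T_n(2x² - 1)`, the value `T_{2n}(i c)` is `T_n(-(2c² + 1))`. Factoring `T_n`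
over its roots `cos((2k - 1)π/(2n))` and using `1 + cos 2φ = 2 cos² φ`, each factor becomes
`-(2c² + 2 cos²((2k - 1)π/(4n)))`; the signs and powers of two then cancel against
`(-1)^n · 2`, and the theorem is the product of these identities over `c = cos(hπ/(2m + 1))`.
-/

open Real Polynomial

namespace Polynomial.Chebyshev

theorem T_real_eq_C_mul_prod (n : ℕ) :
    T ℝ n = Polynomial.C (2 ^ (n - 1)) *
      ∏ k ∈ Finset.range n, (X - Polynomial.C (cos ((2 * k + 1) * π / (2 * n)))) := by
  have hinj := (Finset.range n).nodup_map_iff_injOn.mp (roots_T_real_nodup n)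
  have hcard : (T ℝ n).roots.card = (T ℝ n).natDegree := by
    rw [roots_T_real, natDegree_T, Finset.card_val, Finset.card_image_of_injOn hinj]
    simp
  rw [← C_leadingCoeff_mul_prod_multiset_X_sub_C hcard, leadingCoeff_T, roots_T_real,
    ← Finset.prod_eq_multiset_prod, Finset.prod_image hinj, Int.natAbs_natCast]

theorem T_two_mul_eval {R : Type*} [CommRing R] (n : ℤ) (x : R) :
    (T R (2 * n)).eval x = (T R n).eval (2 * x ^ 2 - 1) := by
  rw [mul_comm, T_mul, eval_comp, T_two]
  simp

theorem neg_one_pow_mul_two_mul_T_real_eval_neg {n : ℕ} (hn : n ≠ 0) (c : ℝ) :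
    (-1) ^ n * 2 * (T ℝ n).eval (-(2 * c ^ 2 + 1)) =
      ∏ k ∈ Finset.Icc 1 n, (4 * c ^ 2 + 4 * cos ((2 * k - 1) * π / (4 * n)) ^ 2) := by
  have hfactor (k : ℕ) : -(2 * c ^ 2 + 1) - cos ((2 * k + 1) * π / (2 * n)) =
      -(2 * c ^ 2 + 2 * cos ((2 * k + 1) * π / (4 * n)) ^ 2) := by
    rw [cos_sq, show 2 * ((2 * k + 1) * π / (4 * n)) = (2 * k + 1) * π / (2 * n) by
      field_simp; ring]
    ring
  have hpow : (-1 : ℝ) ^ n * 2 * (2 ^ (n - 1) * (-1) ^ n) = 2 ^ n := by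
    have hsq : (-1 : ℝ) ^ n * (-1) ^ n = 1 := by rw [← mul_pow, neg_one_mul, neg_neg, one_pow]
    linear_combination (2 * 2 ^ (n - 1) : ℝ) * hsq + mul_pow_sub_one hn (2 : ℝ)
  rw [T_real_eq_C_mul_prod, eval_mul, eval_C, eval_prod]
  simp only [eval_sub, eval_X, eval_C, hfactor, Finset.prod_neg, Finset.card_range]
  calc _ = ∏ k ∈ Finset.range n, 2 * (2 * c ^ 2 + 2 * cos ((2 * k + 1) * π / (4 * n)) ^ 2) := by
        rw [Finset.prod_mul_distrib, Finset.prod_const, Finset.card_range, ← hpow]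
        ring
    _ = ∏ k ∈ Finset.range n,
          (4 * c ^ 2 + 4 * cos ((2 * ((k + 1 : ℕ) : ℝ) - 1) * π / (4 * n)) ^ 2) := by
        refine Finset.prod_congr rfl fun k _ => ?_
        rw [show 2 * ((k + 1 : ℕ) : ℝ) - 1 = 2 * k + 1 by push_cast; ring]
        ring
    _ = _ := by
        rw [Finset.range_eq_Ico, Finset.prod_Ico_add'
          (fun k : ℕ => 4 * c ^ 2 + 4 * cos ((2 * (k : ℝ) - 1) * π / (4 * n)) ^ 2) 0 n 1]
        rfl

theorem T_complex_two_mul_eval_I_mul (n : ℕ) (c : ℝ) :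
    (T ℂ (2 * n)).eval (Complex.I * c) = (((T ℝ n).eval (-(2 * c ^ 2 + 1)) : ℝ) : ℂ) := by
  rw [T_two_mul_eval, complex_ofReal_eval_T, mul_pow, Complex.I_sq]
  push_cast
  congr 1
  ring

end Polynomial.Chebyshev

theorem chebyshevT_product_eq_double_product_general (m n : ℕ) (hn : 1 ≤ n) :
    (-1 : ℂ) ^ (m * n) * 2 ^ m *
      ∏ h ∈ Finset.Icc 1 m,
        (Polynomial.Chebyshev.T ℂ (2 * n)).eval
          (Complex.I * (Real.cos (h * π / (2 * m + 1)) : ℂ)) =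
      ((∏ h ∈ Finset.Icc 1 m, ∏ k ∈ Finset.Icc 1 n,
        (4 * Real.cos (h * π / (2 * m + 1)) ^ 2 +
         4 * Real.cos ((2 * k - 1) * π / (4 * n)) ^ 2) : ℝ) : ℂ) := by
  have hconst : (-1 : ℂ) ^ (m * n) * 2 ^ m = ∏ _h ∈ Finset.Icc 1 m, ((-1) ^ n * 2) := by
    rw [Finset.prod_const, Nat.card_Icc, Nat.add_sub_cancel, mul_pow, pow_mul']
  rw [hconst, ← Finset.prod_mul_distrib, Complex.ofReal_prod]
  refine Finset.prod_congr rfl fun h _ => ?_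
  rw [mul_assoc, Polynomial.Chebyshev.T_complex_two_mul_eval_I_mul,
    ← Polynomial.Chebyshev.neg_one_pow_mul_two_mul_T_real_eval_neg (by omega)]
  push_cast
  ring

theorem chebyshevT_product_eq_double_product (m n : ℕ) (hm : 1 ≤ m) (hn : 1 ≤ n) :
    (-1 : ℂ) ^ (m * n) * 2 ^ m *
      ∏ h ∈ Finset.Icc 1 m,
        (Polynomial.Chebyshev.T ℂ (2 * n)).eval
          (Complex.I * (Real.cos (h * π / (2 * m + 1)) : ℂ)) =
      ((∏ h ∈ Finset.Icc 1 m, ∏ k ∈ Finset.Icc 1 n,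
        (4 * Real.cos (h * π / (2 * m + 1)) ^ 2 +
         4 * Real.cos ((2 * k - 1) * π / (4 * n)) ^ 2) : ℝ) : ℂ) :=
  chebyshevT_product_eq_double_product_general m n hn
end
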